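/- Bias decomposition with undefined potential outcomes, main-effect part (Theorem 3, first display): ψ − φ₁ = Σ_{a∈{0,1}} (−1)^{1−a} Cov( Y^(a,0), ε_a ) + Σ_{a∈{0,1}} Σ_{n=0}^{g_max} (−1)^{1−a} Cov( γ(a), ε_a | N=n ) · P(N=n), where γ(a) := Y^(a) − Y^(a,0) and Cov(·,·|N=n) denotes covariance under P(·|N=n). -/

import Mathlib

open MeasureTheory ProbabilityTheory Set

/-- The indicator function of a set, as a real-valued random variable. -/
noncomputable def ind {Ω : Type*} (s : Set Ω) : Ω → ℝ := s.indicator fun _ => 1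

/-- The covariance of two real random variables, `Cov(f,g) = E[f·g] − E[f]·E[g]`. -/
noncomputable def cov {Ω : Type*} {m : MeasurableSpace Ω} (μ : MeasureTheory.Measure Ω)
    (f g : Ω → ℝ) : ℝ :=
  (∫ ω, f ω * g ω ∂μ) - (∫ ω, f ω ∂μ) * ∫ ω, g ω ∂μ

/-!
For each arm `a`, conditional exchangeability given `(𝓕, N)` upgrades to
`P(A = a | 𝓕, N, Y^(a)) = π_a`: on `σ(𝓕, N, Y^(a))` both are densities of `P(· ∩ {A = a})`
as soon as they agree on the π-system of sets `S ∩ {Y^(a) ∈ t}` with `S ∈ σ(𝓕, N)`, and there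
the conditional independence factorizes `P(Y^(a) ∈ t, A = a | 𝓕, N)`. Consequently the weighted
mean `E[1{A = a} Y / e_a]` equals `E[Y^(a) ε_a]`.

Since neither propensity depends on `N`, applying the tower property twice gives
`E[1{N = n} π_a / e_a] = E[1{N = n} 1{A = a} / e_a] = P(N = n)`: the weight `ε_a` has mean one on
every stratum of `N`. Hence `E[Y^(a) ε_a] − E[Y^(a)]` splits, with `Y^(a) = Y^(a,0) + γ(a)`, into
`Cov(Y^(a,0), ε_a)` plus the stratified covariances `Σ_n Cov(γ(a), ε_a | N = n) P(N = n)`.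
-/

section Indicator

variable {Ω : Type*}

lemma ind_mul (s : Set Ω) (f : Ω → ℝ) (ω : Ω) : ind s ω * f ω = s.indicator f ω := by
  by_cases h : ω ∈ s <;> simp [ind, h]

lemma ind_inter (s t : Set Ω) (ω : Ω) : ind (s ∩ t) ω = ind s ω * ind t ω := by
  by_cases hs : ω ∈ s <;> by_cases ht : ω ∈ t <;> simp [ind, hs, ht]

variable {m mΩ : MeasurableSpace Ω} {μ : Measure Ω}

lemma measurable_ind {s : Set Ω} (hs : MeasurableSet[m] s) : Measurable[m] (ind s) :=
  measurable_const.indicator hs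

lemma integrable_ind [IsFiniteMeasure μ] {s : Set Ω} (hs : MeasurableSet s) :
    Integrable (ind s) μ :=
  (integrable_const 1).indicator hs

lemma integral_ind_mul {s : Set Ω} (hs : MeasurableSet s) (f : Ω → ℝ) :
    ∫ ω, ind s ω * f ω ∂μ = ∫ ω in s, f ω ∂μ := by
  simp_rw [ind_mul, integral_indicator hs]

lemma integral_ind {s : Set Ω} (hs : MeasurableSet s) : ∫ ω, ind s ω ∂μ = μ.real s := by
  simpa using integral_ind_mul (μ := μ) hs 1

lemma setIntegral_ind {s t : Set Ω} (hs : MeasurableSet s) (ht : MeasurableSet t) :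
    ∫ ω in s, ind t ω ∂μ = μ.real (s ∩ t) := by
  rw [← integral_ind_mul hs, ← integral_ind (hs.inter ht)]
  simp_rw [ind_inter]

end Indicator

section CondExp

variable {Ω : Type*} {m mΩ : MeasurableSpace Ω} {μ : Measure Ω}

lemma condExp_ind_nonneg (B : Set Ω) : 0 ≤ᵐ[μ] μ[ind B|m] :=
  condExp_nonneg (Filter.Eventually.of_forall fun ω => by by_cases h : ω ∈ B <;> simp [ind, h])

variable [IsFiniteMeasure μ]

lemma integral_mul_ind_eq_of_condExp_ae_eq (hm : m ≤ mΩ) {B : Set Ω} (hB : MeasurableSet B)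
    {p Z : Ω → ℝ} (hp : μ[ind B|m] =ᵐ[μ] p) (hZ : StronglyMeasurable[m] Z)
    (hZB : Integrable (fun ω => Z ω * ind B ω) μ) :
    ∫ ω, Z ω * ind B ω ∂μ = ∫ ω, Z ω * p ω ∂μ := calc
  _ = ∫ ω, (μ[Z * ind B|m]) ω ∂μ := (integral_condExp hm).symm
  _ = ∫ ω, Z ω * p ω ∂μ := by
    refine integral_congr_ae ?_
    filter_upwards [condExp_mul_of_stronglyMeasurable_left hZ hZB (integrable_ind hB), hp]
      with ω h₁ h₂
    rw [h₁, Pi.mul_apply, h₂]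

lemma setIntegral_condExp_ind (hm : m ≤ mΩ) {B S : Set Ω} (hB : MeasurableSet B)
    (hS : MeasurableSet[m] S) : ∫ ω in S, (μ[ind B|m]) ω ∂μ = μ.real (S ∩ B) := by
  rw [setIntegral_condExp hm (integrable_ind hB) hS, setIntegral_ind (hm S hS) hB]

lemma restrict_apply_eq_withDensity_condExp_ind_iff {B S : Set Ω} (hS : MeasurableSet S) :
    μ.restrict B S = μ.withDensity (fun ω => ENNReal.ofReal ((μ[ind B|m]) ω)) S
      ↔ ∫ ω in S, (μ[ind B|m]) ω ∂μ = μ.real (S ∩ B) := by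
  have hI : ∫⁻ ω in S, ENNReal.ofReal ((μ[ind B|m]) ω) ∂μ
      = ENNReal.ofReal (∫ ω in S, (μ[ind B|m]) ω ∂μ) :=
    (ofReal_integral_eq_lintegral_ofReal integrable_condExp.integrableOn
      (ae_restrict_of_ae (condExp_ind_nonneg B))).symm
  rw [Measure.restrict_apply hS, withDensity_apply _ hS, hI, ← ofReal_measureReal,
    ENNReal.ofReal_eq_ofReal_iff measureReal_nonneg
      (integral_nonneg_of_ae (ae_restrict_of_ae (condExp_ind_nonneg B))), eq_comm]

lemma trim_restrict_eq_trim_withDensity_condExp_ind (hm : m ≤ mΩ) {B : Set Ω}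
    (hB : MeasurableSet B) :
    (μ.restrict B).trim hm
      = (μ.withDensity fun ω => ENNReal.ofReal ((μ[ind B|m]) ω)).trim hm := by
  refine @Measure.ext Ω m _ _ fun S hS => ?_
  rw [trim_measurableSet_eq hm hS, trim_measurableSet_eq hm hS,
    restrict_apply_eq_withDensity_condExp_ind_iff (hm S hS)]
  exact setIntegral_condExp_ind hm hB hS

lemma integrable_ind_mul_inv_of_condExp_ae_eq (hm : m ≤ mΩ) {B : Set Ω} (hB : MeasurableSet B)
    {e : Ω → ℝ} (he : StronglyMeasurable[m] e) (hBe : μ[ind B|m] =ᵐ[μ] e)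
    (he_pos : ∀ᵐ ω ∂μ, 0 < e ω) :
    Integrable (fun ω => ind B ω * (e ω)⁻¹) μ := by
  have he_inv : Measurable[m] fun ω => ENNReal.ofReal (e ω)⁻¹ :=
    he.measurable.inv.ennreal_ofReal
  have hfin : ∫⁻ ω in B, ENNReal.ofReal (e ω)⁻¹ ∂μ = μ Set.univ := calc
    _ = ∫⁻ ω, ENNReal.ofReal (e ω)⁻¹ ∂(μ.restrict B).trim hm := (lintegral_trim hm he_inv).symm
    _ = ∫⁻ ω, ENNReal.ofReal (e ω)⁻¹
          ∂(μ.withDensity fun ω => ENNReal.ofReal ((μ[ind B|m]) ω)) := by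
      rw [trim_restrict_eq_trim_withDensity_condExp_ind hm hB, lintegral_trim hm he_inv]
    _ = ∫⁻ ω, 1 ∂μ := by
      rw [lintegral_withDensity_eq_lintegral_mul₀
        (stronglyMeasurable_condExp.mono hm).measurable.ennreal_ofReal.aemeasurable
        (he_inv.mono hm le_rfl).aemeasurable]
      refine lintegral_congr_ae ?_
      filter_upwards [hBe, he_pos] with ω h₁ h₂
      rw [Pi.mul_apply, h₁, ← ENNReal.ofReal_mul h₂.le, mul_inv_cancel₀ h₂.ne',
        ENNReal.ofReal_one]
    _ = μ Set.univ := lintegral_one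
  have hinv : IntegrableOn (fun ω => (e ω)⁻¹) B μ := by
    refine ⟨(he.mono hm).measurable.inv.aestronglyMeasurable, ?_⟩
    rw [hasFiniteIntegral_iff_ofReal (ae_restrict_of_ae (he_pos.mono fun ω h => (inv_pos.2 h).le)),
      hfin]
    exact measure_lt_top μ _
  exact (hinv.integrable_indicator hB).congr
    (ae_of_all _ fun ω => (ind_mul B (fun ω => (e ω)⁻¹) ω).symm)

end CondExp

section PiSystem

variable {Ω : Type*}

lemma isPiSystem_image2_inter_measurableSet (m₁ m₂ : MeasurableSpace Ω) :
    IsPiSystem (Set.image2 (· ∩ ·) {s | MeasurableSet[m₁] s} {t | MeasurableSet[m₂] t}) := by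
  rintro _ ⟨s₁, hs₁, t₁, ht₁, rfl⟩ _ ⟨s₂, hs₂, t₂, ht₂, rfl⟩ -
  exact ⟨s₁ ∩ s₂, hs₁.inter hs₂, t₁ ∩ t₂, ht₁.inter ht₂, Set.inter_inter_inter_comm _ _ _ _⟩

lemma generateFrom_image2_inter_measurableSet (m₁ m₂ : MeasurableSpace Ω) :
    MeasurableSpace.generateFrom
      (Set.image2 (· ∩ ·) {s | MeasurableSet[m₁] s} {t | MeasurableSet[m₂] t}) = m₁ ⊔ m₂ := by
  refine le_antisymm (MeasurableSpace.generateFrom_le ?_) (sup_le (fun s hs => ?_) fun t ht => ?_)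
  · rintro _ ⟨s, hs, t, ht, rfl⟩
    exact (le_sup_left (b := m₂) s hs).inter (le_sup_right (a := m₁) t ht)
  · exact MeasurableSpace.measurableSet_generateFrom ⟨s, hs, Set.univ, .univ, Set.inter_univ s⟩
  · exact MeasurableSpace.measurableSet_generateFrom ⟨Set.univ, .univ, t, ht, Set.univ_inter t⟩

end PiSystem

section CondIndep

variable {Ω β γ : Type*} {m mΩ : MeasurableSpace Ω} [StandardBorelSpace Ω]
  {μ : Measure Ω} [IsFiniteMeasure μ] [mβ : MeasurableSpace β] [MeasurableSpace γ]
  {X : Ω → β} {A : Ω → γ} {s : Set γ}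

lemma setIntegral_condExp_ind_inter_preimage (hm : m ≤ mΩ) (hX : Measurable X)
    (hA : Measurable A) (hXA : CondIndepFun m hm X A μ) (hs : MeasurableSet s) {S : Set Ω}
    (hS : MeasurableSet[m] S) {t : Set β} (ht : MeasurableSet t) :
    ∫ ω in S ∩ X ⁻¹' t, (μ[ind (A ⁻¹' s)|m]) ω ∂μ = μ.real (S ∩ X ⁻¹' t ∩ A ⁻¹' s) := by
  set p := μ[ind (A ⁻¹' s)|m]
  have hXt : MeasurableSet (X ⁻¹' t) := hX ht
  have hprod : μ[ind (X ⁻¹' t ∩ A ⁻¹' s)|m] =ᵐ[μ] μ[ind (X ⁻¹' t)|m] * p :=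
    (condIndepFun_iff_condExp_inter_preimage_eq_mul hX hA).mp hXA t s ht hs
  have hSp : StronglyMeasurable[m] fun ω => ind S ω * p ω :=
    ((measurable_ind hS).mul stronglyMeasurable_condExp.measurable).stronglyMeasurable
  have hSpX : Integrable (fun ω => ind S ω * p ω * ind (X ⁻¹' t) ω) μ := by
    simp_rw [mul_comm _ (ind (X ⁻¹' t) _), ← mul_assoc, ← ind_inter, ind_mul]
    exact integrable_condExp.indicator (hXt.inter (hm S hS))
  calc ∫ ω in S ∩ X ⁻¹' t, p ω ∂μ = ∫ ω, ind S ω * p ω * ind (X ⁻¹' t) ω ∂μ := by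
        rw [← integral_ind_mul ((hm S hS).inter hXt)]
        simp_rw [ind_inter]
        congr 1
        ext ω
        ring
    _ = ∫ ω, ind S ω * p ω * (μ[ind (X ⁻¹' t)|m]) ω ∂μ :=
        integral_mul_ind_eq_of_condExp_ae_eq hm hXt Filter.EventuallyEq.rfl hSp hSpX
    _ = ∫ ω in S, (μ[ind (X ⁻¹' t ∩ A ⁻¹' s)|m]) ω ∂μ := by
        rw [← integral_ind_mul (hm S hS)]
        refine integral_congr_ae ?_
        filter_upwards [hprod] with ω hω
        rw [hω, Pi.mul_apply]
        ring
    _ = μ.real (S ∩ X ⁻¹' t ∩ A ⁻¹' s) := by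
        rw [setIntegral_condExp_ind hm (hXt.inter (hA hs)) hS, Set.inter_assoc]

theorem condExp_ind_preimage_sup_comap_ae_eq (hm : m ≤ mΩ) (hX : Measurable X)
    (hA : Measurable A) (hXA : CondIndepFun m hm X A μ) (hs : MeasurableSet s) :
    μ[ind (A ⁻¹' s)|m ⊔ mβ.comap X] =ᵐ[μ] μ[ind (A ⁻¹' s)|m] := by
  have hmX : m ⊔ mβ.comap X ≤ mΩ := sup_le hm hX.comap_le
  have hext : ∀ S, MeasurableSet[m ⊔ mβ.comap X] S → μ.restrict (A ⁻¹' s) S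
      = μ.withDensity (fun ω => ENNReal.ofReal ((μ[ind (A ⁻¹' s)|m]) ω)) S := by
    refine fun S hS => ext_on_measurableSpace_of_generate_finite mΩ _ ?_ hmX
      (generateFrom_image2_inter_measurableSet m (mβ.comap X)).symm
      (isPiSystem_image2_inter_measurableSet m (mβ.comap X)) ?_ hS
    · rintro _ ⟨S, hS, _, ⟨t, ht, rfl⟩, rfl⟩
      exact (restrict_apply_eq_withDensity_condExp_ind_iff ((hm S hS).inter (hX ht))).2
        (setIntegral_condExp_ind_inter_preimage hm hX hA hXA hs hS ht)
    · refine (restrict_apply_eq_withDensity_condExp_ind_iff .univ).2 ?_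
      simpa using setIntegral_condExp_ind_inter_preimage hm hX hA hXA hs MeasurableSet.univ
        MeasurableSet.univ
  refine (ae_eq_condExp_of_forall_setIntegral_eq hmX (integrable_ind (hA hs))
    (fun _ _ _ => integrable_condExp.integrableOn) (fun S hS _ => ?_)
    (stronglyMeasurable_condExp.mono (le_sup_left : m ≤ m ⊔ mβ.comap X)).aestronglyMeasurable).symm
  rw [(restrict_apply_eq_withDensity_condExp_ind_iff (hmX S hS)).1 (hext S hS),
    setIntegral_ind (hmX S hS) (hA hs)]

end CondIndep

section Weighting

variable {Ω γ : Type*} {m m₁ m₂ mΩ : MeasurableSpace Ω} {μ : Measure Ω} [IsFiniteMeasure μ]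

theorem integral_ind_mul_div_eq_integral_mul_div [StandardBorelSpace Ω] [MeasurableSpace γ]
    (hm : m ≤ mΩ) {X : Ω → ℝ} {A : Ω → γ} (hX : Measurable X)
    (hA : Measurable A) (hXA : CondIndepFun m hm X A μ) {s : Set γ} (hs : MeasurableSet s)
    {π e : Ω → ℝ} (hπ : μ[ind (A ⁻¹' s)|m] =ᵐ[μ] π) (he : StronglyMeasurable[m] e)
    (hint : Integrable (fun ω => ind (A ⁻¹' s) ω * X ω / e ω) μ) :
    ∫ ω, ind (A ⁻¹' s) ω * X ω / e ω ∂μ = ∫ ω, X ω * (π ω / e ω) ∂μ := by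
  have hXm : Measurable[m ⊔ MeasurableSpace.comap X inferInstance] X :=
    measurable_iff_comap_le.2 le_sup_right
  have hZ : StronglyMeasurable[m ⊔ MeasurableSpace.comap X inferInstance] fun ω => X ω / e ω :=
    (hXm.div (he.measurable.mono le_sup_left le_rfl)).stronglyMeasurable
  calc ∫ ω, ind (A ⁻¹' s) ω * X ω / e ω ∂μ = ∫ ω, X ω / e ω * ind (A ⁻¹' s) ω ∂μ := by
        congr 1; ext ω; ring
    _ = ∫ ω, X ω / e ω * π ω ∂μ :=
        integral_mul_ind_eq_of_condExp_ae_eq (sup_le hm hX.comap_le) (hA hs)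
          ((condExp_ind_preimage_sup_comap_ae_eq hm hX hA hXA hs).trans hπ) hZ
          (hint.congr (ae_of_all _ fun ω => by ring))
    _ = ∫ ω, X ω * (π ω / e ω) ∂μ := by
        congr 1; ext ω; ring

theorem setIntegral_div_eq_measureReal (h₁₂ : m₁ ≤ m₂) (h₂ : m₂ ≤ mΩ) {B : Set Ω}
    (hB : MeasurableSet B) {π e : Ω → ℝ}
    (he : StronglyMeasurable[m₁] e) (hBe : μ[ind B|m₁] =ᵐ[μ] e) (hBπ : μ[ind B|m₂] =ᵐ[μ] π)
    (he_pos : ∀ᵐ ω ∂μ, 0 < e ω) {S : Set Ω} (hS : MeasurableSet[m₁] S) :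
    ∫ ω in S, π ω / e ω ∂μ = μ.real S := by
  have hZ : StronglyMeasurable[m₁] fun ω => ind S ω * (e ω)⁻¹ :=
    ((measurable_ind hS).mul he.measurable.inv).stronglyMeasurable
  have hZB : Integrable (fun ω => ind S ω * (e ω)⁻¹ * ind B ω) μ := by
    refine ((integrable_ind_mul_inv_of_condExp_ae_eq (h₁₂.trans h₂) hB he hBe he_pos).indicator
      (h₁₂.trans h₂ S hS)).congr (ae_of_all _ fun ω => ?_)
    rw [← ind_mul]
    ring
  calc ∫ ω in S, π ω / e ω ∂μ = ∫ ω, ind S ω * (e ω)⁻¹ * π ω ∂μ := by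
        rw [← integral_ind_mul (h₁₂.trans h₂ S hS)]
        congr 1; ext ω; ring
    _ = ∫ ω, ind S ω * (e ω)⁻¹ * ind B ω ∂μ :=
        (integral_mul_ind_eq_of_condExp_ae_eq h₂ hB hBπ (hZ.mono h₁₂) hZB).symm
    _ = ∫ ω, ind S ω * (e ω)⁻¹ * e ω ∂μ :=
        integral_mul_ind_eq_of_condExp_ae_eq (h₁₂.trans h₂) hB hBe hZ hZB
    _ = ∫ ω, ind S ω ∂μ := by
        refine integral_congr_ae ?_
        filter_upwards [he_pos] with ω hω
        rw [mul_assoc, inv_mul_cancel₀ hω.ne', mul_one]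
    _ = μ.real S := integral_ind (h₁₂.trans h₂ S hS)

end Weighting

section Decomposition

variable {Ω ι : Type*} {mΩ : MeasurableSpace Ω} {μ : Measure Ω}

lemma integral_eq_sum_setIntegral_fiber [MeasurableSpace ι] [MeasurableSingletonClass ι]
    {N : Ω → ι} (hN : Measurable N) (t : Finset ι) (hNt : ∀ ω, N ω ∈ t) {f : Ω → ℝ}
    (hf : Integrable f μ) :
    ∫ ω, f ω ∂μ = ∑ i ∈ t, ∫ ω in {ω | N ω = i}, f ω ∂μ := by
  have hcover : ⋃ i ∈ t, {ω | N ω = i} = Set.univ :=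
    Set.eq_univ_of_forall fun ω => Set.mem_biUnion (hNt ω) rfl
  rw [← integral_biUnion_finset t (s := fun i => {ω | N ω = i})
    (fun i _ => hN (measurableSet_singleton i))
    (fun i _ j _ hij => Set.disjoint_left.2 fun ω hi hj => hij (hi.symm.trans hj))
    (fun i _ => hf.integrableOn), hcover, setIntegral_univ]

lemma integral_cond_eq_inv_mul_setIntegral (s : Set Ω) (f : Ω → ℝ) :
    ∫ ω, f ω ∂μ[|s] = (μ.real s)⁻¹ * ∫ ω in s, f ω ∂μ := by
  rw [ProbabilityTheory.cond, integral_smul_measure, ENNReal.toReal_inv, smul_eq_mul]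
  rfl

lemma cov_cond_mul_measureReal {s : Set Ω} (hs : μ.real s ≠ 0) {f g : Ω → ℝ}
    (hg : ∫ ω in s, g ω ∂μ = μ.real s) :
    cov μ[|s] f g * μ.real s = ∫ ω in s, f ω * g ω ∂μ - ∫ ω in s, f ω ∂μ := by
  simp only [cov, integral_cond_eq_inv_mul_setIntegral, hg]
  field_simp

theorem cov_add_sum_cov_cond_eq [MeasurableSpace ι] [MeasurableSingletonClass ι] {N : Ω → ι}
    (hN : Measurable N) (t : Finset ι) (hNt : ∀ ω, N ω ∈ t)
    (hN_pos : ∀ i ∈ t, μ.real {ω | N ω = i} ≠ 0) {f h ε : Ω → ℝ} (hf : Integrable f μ)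
    (hh : Integrable h μ) (hfε : Integrable (fun ω => f ω * ε ω) μ)
    (hhε : Integrable (fun ω => h ω * ε ω) μ) (hε : ∫ ω, ε ω ∂μ = 1)
    (hεN : ∀ i ∈ t, ∫ ω in {ω | N ω = i}, ε ω ∂μ = μ.real {ω | N ω = i}) :
    cov μ h ε + ∑ i ∈ t, cov μ[|{ω | N ω = i}] (fun ω => f ω - h ω) ε * μ.real {ω | N ω = i}
      = ∫ ω, f ω * ε ω ∂μ - ∫ ω, f ω ∂μ := by
  have hfhε : Integrable (fun ω => (f ω - h ω) * ε ω) μ :=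
    (hfε.sub hhε).congr (ae_of_all _ fun ω => by simp only [Pi.sub_apply]; ring)
  rw [Finset.sum_congr rfl fun i hi => cov_cond_mul_measureReal (hN_pos i hi) (hεN i hi),
    Finset.sum_sub_distrib, ← integral_eq_sum_setIntegral_fiber hN t hNt hfhε,
    ← integral_eq_sum_setIntegral_fiber hN t hNt (f := fun ω => f ω - h ω) (hf.sub hh)]
  simp only [cov, hε, mul_one, sub_mul]
  rw [integral_sub hfε hhε, integral_sub hf hh]
  ring

end Decomposition

section Arm

variable {Ω γ ι : Type*} {mG mF mΩ : MeasurableSpace Ω} [StandardBorelSpace Ω] {μ : Measure Ω}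
  [IsProbabilityMeasure μ] [MeasurableSpace γ] [MeasurableSpace ι] [MeasurableSingletonClass ι]

theorem integral_ind_mul_div_sub_integral_eq_cov_add_sum_cov_cond (hGF : mG ≤ mF)
    (hF : mF ≤ mΩ) {N : Ω → ι} (hN : Measurable N) (t : Finset ι) (hNt : ∀ ω, N ω ∈ t)
    (hN_pos : ∀ i ∈ t, μ.real {ω | N ω = i} ≠ 0) {A : Ω → γ} (hA : Measurable A) {s : Set γ}
    (hs : MeasurableSet s) {X X₀ Y π e ε : Ω → ℝ}
    (hX : Measurable X) (hX_int : Integrable X μ) (hX₀ : Integrable X₀ μ)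
    (hXA : CondIndepFun (mF ⊔ MeasurableSpace.comap N inferInstance) (sup_le hF hN.comap_le)
      X A μ)
    (hπ : μ[ind (A ⁻¹' s)|mF ⊔ MeasurableSpace.comap N inferInstance] =ᵐ[μ] π)
    (he : StronglyMeasurable[mG] e)
    (he_N : μ[ind (A ⁻¹' s)|mG ⊔ MeasurableSpace.comap N inferInstance] =ᵐ[μ] e)
    (he_pos : ∀ᵐ ω ∂μ, 0 < e ω) (hε : ∀ ω, ε ω = π ω / e ω)
    (hXε : Integrable (fun ω => X ω * ε ω) μ) (hX₀ε : Integrable (fun ω => X₀ ω * ε ω) μ)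
    (hY : ∀ ω, ind (A ⁻¹' s) ω * Y ω = ind (A ⁻¹' s) ω * X ω)
    (hY_int : Integrable (fun ω => ind (A ⁻¹' s) ω * Y ω / e ω) μ) :
    ∫ ω, ind (A ⁻¹' s) ω * Y ω / e ω ∂μ - ∫ ω, X ω ∂μ
      = cov μ X₀ ε + ∑ i ∈ t,
          cov μ[|{ω | N ω = i}] (fun ω => X ω - X₀ ω) ε * μ.real {ω | N ω = i} := by
  have hweight : ∀ S, MeasurableSet[mG ⊔ MeasurableSpace.comap N inferInstance] S →
      ∫ ω in S, ε ω ∂μ = μ.real S := fun S hS => by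
    simp_rw [hε]
    exact setIntegral_div_eq_measureReal (sup_le_sup_right hGF _) (sup_le hF hN.comap_le)
      (hA hs) (he.mono le_sup_left) he_N hπ he_pos hS
  have hψ : ∫ ω, ind (A ⁻¹' s) ω * Y ω / e ω ∂μ = ∫ ω, X ω * ε ω ∂μ := by
    simp_rw [hY, hε]
    exact integral_ind_mul_div_eq_integral_mul_div _ hX hA hXA hs hπ
      (he.mono (hGF.trans le_sup_left))
      (hY_int.congr (ae_of_all _ fun ω => congrArg (· / e ω) (hY ω)))
  rw [hψ, cov_add_sum_cov_cond_eq hN t hNt hN_pos hX_int hX₀ hXε hX₀ε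
    (by simpa using hweight Set.univ MeasurableSet.univ)
    (fun i _ => hweight _ (le_sup_right (a := mG) _ ⟨{i}, measurableSet_singleton i, rfl⟩))]

end Arm

section Consistency

variable {Ω : Type*} {mΩ : MeasurableSpace Ω} {μ : Measure Ω}

lemma ind_mul_observed {A : Ω → ℕ} {a : ℕ} (ha : a ≤ 1) (Z : ℕ → Ω → ℝ) (ω : Ω) :
    ind {ω' | A ω' = a} ω * (ind {ω' | A ω' = 1} ω * Z 1 ω + ind {ω' | A ω' = 0} ω * Z 0 ω)
      = ind {ω' | A ω' = a} ω * Z a ω := by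
  by_cases h : A ω = a
  · interval_cases a <;> simp [ind, h]
  · simp [ind, h]

lemma measurable_sum_ind_mul {G : Ω → ℕ} (hG : Measurable G) {Z : ℕ → Ω → ℝ} {t : Finset ℕ}
    (hZ : ∀ g ∈ t, Measurable (Z g)) :
    Measurable fun ω => ∑ g ∈ t, ind {ω' | G ω' = g} ω * Z g ω :=
  Finset.measurable_sum _ fun g hg =>
    (measurable_ind (hG (measurableSet_singleton g))).mul (hZ g hg)

lemma integrable_sum_ind_mul {G : Ω → ℕ} (hG : Measurable G) {Z : ℕ → Ω → ℝ} {t : Finset ℕ}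
    (hZ : ∀ g ∈ t, Integrable (Z g) μ) :
    Integrable (fun ω => ∑ g ∈ t, ind {ω' | G ω' = g} ω * Z g ω) μ := by
  simp_rw [ind_mul]
  exact integrable_finsetSum _ fun g hg => (hZ g hg).indicator (hG (measurableSet_singleton g))

end Consistency

theorem bias_decomposition_undefined_potential_outcomes_phi1_general
    {Ω : Type*} [mΩ : MeasurableSpace Ω] [StandardBorelSpace Ω]
    (μ : Measure Ω) [IsProbabilityMeasure μ]
    (gmax : ℕ)
    (A N G : Ω → ℕ) (hN : ∀ ω, N ω ≤ gmax)
    (hAmeas : Measurable A) (hNmeas : Measurable N) (hGmeas : Measurable G)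
    (Ypo : ℕ → ℕ → Ω → ℝ)
    (hYpomeas : ∀ a ≤ 1, ∀ g ≤ gmax, Measurable (Ypo a g))
    (hYposq : ∀ a ≤ 1, ∀ g ≤ gmax, MemLp (Ypo a g) 2 μ)
    (Ya : ℕ → Ω → ℝ)
    (hYa : ∀ a ω, Ya a ω = ∑ g ∈ Finset.range (gmax + 1), ind {ω' | G ω' = g} ω * Ypo a g ω)
    (Y : Ω → ℝ)
    (hY : ∀ ω, Y ω = ind {ω' | A ω' = 1} ω * Ya 1 ω + ind {ω' | A ω' = 0} ω * Ya 0 ω)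
    (mG mF : MeasurableSpace Ω) (hGF : mG ≤ mF) (hF : mF ≤ mΩ)
    (π e ε : ℕ → Ω → ℝ)
    (he : ∀ a, e a = μ[ind {ω | A ω = a} | mG])
    -- the propensity scores do not depend on N
    (hπN : ∀ a ≤ 1,
      μ[ind {ω | A ω = a} | mF ⊔ MeasurableSpace.comap N inferInstance] =ᵐ[μ] π a)
    (heN : ∀ a ≤ 1,
      μ[ind {ω | A ω = a} | mG ⊔ MeasurableSpace.comap N inferInstance] =ᵐ[μ] e a)
    (hepos : ∀ a ≤ 1, ∀ᵐ ω ∂μ, 0 < e a ω)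
    (hNpos : ∀ n ≤ gmax, 0 < μ {ω | N ω = n})
    -- conditional exchangeability given (𝓕, N)
    (hexch : ∀ a ≤ 1,
      CondIndepFun (mF ⊔ MeasurableSpace.comap N inferInstance)
        (sup_le hF hNmeas.comap_le) (Ya a) A μ)
    (hε : ∀ a ω, ε a ω = π a ω / e a ω)
    (hεYint : ∀ a ≤ 1, Integrable (fun ω => Ya a ω * ε a ω) μ)
    (hεY0int : ∀ a ≤ 1, Integrable (fun ω => Ypo a 0 ω * ε a ω) μ)
    (hwint : ∀ a ≤ 1, Integrable (fun ω => ind {ω' | A ω' = a} ω * Y ω / e a ω) μ) :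
    ((∫ ω, ind {ω' | A ω' = 1} ω * Y ω / e 1 ω ∂μ)
        - ∫ ω, ind {ω' | A ω' = 0} ω * Y ω / e 0 ω ∂μ)
      - ∫ ω, (Ya 1 ω - Ya 0 ω) ∂μ
    = (∑ a ∈ Finset.range 2, (-1 : ℝ) ^ (1 - a) * cov μ (Ypo a 0) (ε a))
      + ∑ a ∈ Finset.range 2, ∑ n ∈ Finset.range (gmax + 1),
          (-1 : ℝ) ^ (1 - a)
            * cov (μ[|{ω | N ω = n}]) (fun ω => Ya a ω - Ypo a 0 ω) (ε a)
            * (μ {ω | N ω = n}).toReal := by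
  have hYa_meas : ∀ a ≤ 1, Measurable[mΩ] (Ya a) := fun a ha => by
    rw [funext (hYa a)]
    exact measurable_sum_ind_mul hGmeas fun g hg =>
      hYpomeas a ha g (Finset.mem_range_succ_iff.1 hg)
  have hYa_int : ∀ a ≤ 1, Integrable (Ya a) μ := fun a ha => by
    rw [funext (hYa a)]
    exact integrable_sum_ind_mul hGmeas fun g hg =>
      (hYposq a ha g (Finset.mem_range_succ_iff.1 hg)).integrable one_le_two
  have harm : ∀ a ≤ 1, ∫ ω, ind {ω' | A ω' = a} ω * Y ω / e a ω ∂μ - ∫ ω, Ya a ω ∂μ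
      = cov μ (Ypo a 0) (ε a) + ∑ n ∈ Finset.range (gmax + 1),
          cov (μ[|{ω | N ω = n}]) (fun ω => Ya a ω - Ypo a 0 ω) (ε a)
            * (μ {ω | N ω = n}).toReal := fun a ha =>
    integral_ind_mul_div_sub_integral_eq_cov_add_sum_cov_cond hGF hF hNmeas _
      (fun ω => Finset.mem_range_succ_iff.2 (hN ω))
      (fun n hn => (measureReal_ne_zero_iff (measure_ne_top _ _)).2
        (hNpos n (Finset.mem_range_succ_iff.1 hn)).ne')
      hAmeas (measurableSet_singleton a) (hYa_meas a ha) (hYa_int a ha)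
      ((hYposq a ha 0 (Nat.zero_le _)).integrable one_le_two) (hexch a ha) (hπN a ha)
      (he a ▸ stronglyMeasurable_condExp) (heN a ha) (hepos a ha) (hε a) (hεYint a ha)
      (hεY0int a ha) (fun ω => by rw [hY]; exact ind_mul_observed ha Ya ω) (hwint a ha)
  rw [integral_sub (hYa_int 1 le_rfl) (hYa_int 0 zero_le_one), Finset.sum_range_succ,
    Finset.sum_range_one, Finset.sum_range_succ (n := 1), Finset.sum_range_one]
  simp only [mul_assoc, ← Finset.mul_sum]
  norm_num
  linarith [harm 0 zero_le_one, harm 1 le_rfl]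

/-- **Bias decomposition with undefined potential outcomes, main-effect part (Theorem 3,
first display).**  In the reference population, under consistency given `N`, positivity,
conditional exchangeability given `(𝓕,N)`, and propensity scores that do not depend on `N`,
`ψ − φ₁ = Σ_a (−1)^{1−a} Cov(Y^(a,0), ε_a)
  + Σ_a Σ_n (−1)^{1−a} Cov(γ(a), ε_a | N=n)·P(N=n)`,
where `γ(a) = Y^(a) − Y^(a,0)` and `Cov(·,·|N=n)` is the covariance under `P(·|N=n)`. -/
theorem bias_decomposition_undefined_potential_outcomes_phi1
    {Ω : Type*} [mΩ : MeasurableSpace Ω] [StandardBorelSpace Ω] [Nonempty Ω]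
    (μ : Measure Ω) [IsProbabilityMeasure μ]
    (gmax : ℕ)
    (A N G : Ω → ℕ) (hA : ∀ ω, A ω ≤ 1) (hN : ∀ ω, N ω ≤ gmax)
    (hGN : ∀ᵐ ω ∂μ, G ω ≤ N ω)
    (hAmeas : Measurable A) (hNmeas : Measurable N) (hGmeas : Measurable G)
    (Ypo : ℕ → ℕ → Ω → ℝ)
    (hYpomeas : ∀ a ≤ 1, ∀ g ≤ gmax, Measurable (Ypo a g))
    (hYposq : ∀ a ≤ 1, ∀ g ≤ gmax, MemLp (Ypo a g) 2 μ)
    (Ya : ℕ → Ω → ℝ)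
    (hYa : ∀ a ω, Ya a ω = ∑ g ∈ Finset.range (gmax + 1), ind {ω' | G ω' = g} ω * Ypo a g ω)
    (Y : Ω → ℝ)
    (hY : ∀ ω, Y ω = ind {ω' | A ω' = 1} ω * Ya 1 ω + ind {ω' | A ω' = 0} ω * Ya 0 ω)
    (mG mF : MeasurableSpace Ω) (hGF : mG ≤ mF) (hF : mF ≤ mΩ)
    (π e ε : ℕ → Ω → ℝ)
    (hπ : ∀ a, π a = μ[ind {ω | A ω = a} | mF])
    (he : ∀ a, e a = μ[ind {ω | A ω = a} | mG])
    -- the propensity scores do not depend on N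
    (hπN : ∀ a ≤ 1,
      μ[ind {ω | A ω = a} | mF ⊔ MeasurableSpace.comap N inferInstance] =ᵐ[μ] π a)
    (heN : ∀ a ≤ 1,
      μ[ind {ω | A ω = a} | mG ⊔ MeasurableSpace.comap N inferInstance] =ᵐ[μ] e a)
    (hπpos : ∀ a ≤ 1, ∀ᵐ ω ∂μ, 0 < π a ω)
    (hepos : ∀ a ≤ 1, ∀ᵐ ω ∂μ, 0 < e a ω)
    (hNpos : ∀ n ≤ gmax, 0 < μ {ω | N ω = n})
    -- conditional exchangeability given (𝓕, N)
    (hexch : ∀ a ≤ 1,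
      CondIndepFun (mF ⊔ MeasurableSpace.comap N inferInstance)
        (sup_le hF hNmeas.comap_le) (Ya a) A μ)
    (hε : ∀ a ω, ε a ω = π a ω / e a ω)
    (hεint : ∀ a ≤ 1, Integrable (ε a) μ)
    (hεYint : ∀ a ≤ 1, Integrable (fun ω => Ya a ω * ε a ω) μ)
    (hεY0int : ∀ a ≤ 1, Integrable (fun ω => Ypo a 0 ω * ε a ω) μ)
    (hwint : ∀ a ≤ 1, Integrable (fun ω => ind {ω' | A ω' = a} ω * Y ω / e a ω) μ) :
    ((∫ ω, ind {ω' | A ω' = 1} ω * Y ω / e 1 ω ∂μ)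
        - ∫ ω, ind {ω' | A ω' = 0} ω * Y ω / e 0 ω ∂μ)
      - ∫ ω, (Ya 1 ω - Ya 0 ω) ∂μ
    = (∑ a ∈ Finset.range 2, (-1 : ℝ) ^ (1 - a) * cov μ (Ypo a 0) (ε a))
      + ∑ a ∈ Finset.range 2, ∑ n ∈ Finset.range (gmax + 1),
          (-1 : ℝ) ^ (1 - a)
            * cov (μ[|{ω | N ω = n}]) (fun ω => Ya a ω - Ypo a 0 ω) (ε a)
            * (μ {ω | N ω = n}).toReal :=
  bias_decomposition_undefined_potential_outcomes_phi1_general (mΩ := mΩ) μ gmax A N G hN hAmeas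
    hNmeas hGmeas Ypo hYpomeas hYposq Ya hYa Y hY mG mF hGF hF π e ε he hπN heN hepos hNpos hexch hε
    hεYint hεY0int hwint
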